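/- arXiv:math/0001096 — 4 statements merged into one kernel-verified Lean document; each statement's English description precedes it below -/
import Mathlib

section
/- Let V be a multiplicative unitary on K ⊗ K and define, on K^{⊗(s+1)}, the operator ϑ_s* (ϑV)_s, where ϑ_s is the permutation unitary implementing the cycle moving the last factor to the front among the first s+1 factors and (ϑV)_s acts as ϑV on factors indicated. Then ϑ_s* ∘ (ϑV)_s = V_{1,s+1} V_{2,s+1} ⋯ V_{s,s+1}, i.e. the unitary implementing the s-fold tensor action equals the ordered product of copies of V acting on each of the first s factors paired with the (s+1)-st. -/
open TensorProduct

noncomputable section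

section Legs

variable (A B C : Type*) [AddCommGroup A] [Module ℂ A] [AddCommGroup B] [Module ℂ B]
  [AddCommGroup C] [Module ℂ C]

/-- A unitary `X` on the first two tensor factors, amplified to a triple tensor product. -/
def leg12 (X : A ⊗[ℂ] B ≃ₗ[ℂ] A ⊗[ℂ] B) :
    (A ⊗[ℂ] B) ⊗[ℂ] C ≃ₗ[ℂ] (A ⊗[ℂ] B) ⊗[ℂ] C :=
  TensorProduct.congr X (LinearEquiv.refl ℂ C)

/-- A unitary `X` on the last two tensor factors, amplified to a triple tensor product. -/
def leg23 (X : B ⊗[ℂ] C ≃ₗ[ℂ] B ⊗[ℂ] C) :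
    (A ⊗[ℂ] B) ⊗[ℂ] C ≃ₗ[ℂ] (A ⊗[ℂ] B) ⊗[ℂ] C :=
  (TensorProduct.assoc ℂ A B C).trans
    ((TensorProduct.congr (LinearEquiv.refl ℂ A) X).trans
      (TensorProduct.assoc ℂ A B C).symm)

/-- The flip of the second and third tensor factors. -/
def swap23 : (A ⊗[ℂ] B) ⊗[ℂ] C ≃ₗ[ℂ] (A ⊗[ℂ] C) ⊗[ℂ] B :=
  (TensorProduct.assoc ℂ A B C).trans
    ((TensorProduct.congr (LinearEquiv.refl ℂ A) (TensorProduct.comm ℂ B C)).trans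
      (TensorProduct.assoc ℂ A C B).symm)

/-- A unitary `X` on the first and third tensor factors, amplified to a triple tensor product. -/
def leg13 (X : A ⊗[ℂ] C ≃ₗ[ℂ] A ⊗[ℂ] C) :
    (A ⊗[ℂ] B) ⊗[ℂ] C ≃ₗ[ℂ] (A ⊗[ℂ] B) ⊗[ℂ] C :=
  (swap23 A B C).trans ((leg12 A C B X).trans (swap23 A C B))

end Legs

/-- `V` is a multiplicative unitary: the pentagon equation `V₁₂V₁₃V₂₃ = V₂₃V₁₂`
(operator products read right to left, i.e. `V₂₃` acts first on the left-hand side). -/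
def Pentagon (K : Type*) [AddCommGroup K] [Module ℂ K]
    (V : K ⊗[ℂ] K ≃ₗ[ℂ] K ⊗[ℂ] K) : Prop :=
  (leg23 K K K V).trans ((leg13 K K K V).trans (leg12 K K K V)) =
    (leg12 K K K V).trans (leg23 K K K V)

/-- `W` (a unitary on `H ⊗ K`) is a representation of `V`:  `W₁₂W₁₃V₂₃ = V₂₃W₁₂`. -/
def IsRepn (H K : Type*) [AddCommGroup H] [Module ℂ H] [AddCommGroup K] [Module ℂ K]
    (V : K ⊗[ℂ] K ≃ₗ[ℂ] K ⊗[ℂ] K) (W : H ⊗[ℂ] K ≃ₗ[ℂ] H ⊗[ℂ] K) : Prop :=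
  (leg23 H K K V).trans ((leg13 H K K W).trans (leg12 H K K W)) =
    (leg12 H K K W).trans (leg23 H K K V)

section Tpow

variable (K : Type) [NormedAddCommGroup K] [InnerProductSpace ℂ K] [CompleteSpace K]

/-- The `n`-th tensor power `K^{⊗n}` (with `K^{⊗0} = ℂ`), as an object of `ModuleCat ℂ`. -/
noncomputable def Tpow : ℕ → ModuleCat ℂ
  | 0 => ModuleCat.of ℂ ℂ
  | (n+1) => ModuleCat.of ℂ ((Tpow n) ⊗[ℂ] K)

/-- The unitary `X` applied to the last two factors of `K^{⊗n} ⊗ K`. -/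
noncomputable def lastPair (X : K ⊗[ℂ] K ≃ₗ[ℂ] K ⊗[ℂ] K) (n : ℕ) :
    (Tpow K (n+1)) ⊗[ℂ] K ≃ₗ[ℂ] (Tpow K (n+1)) ⊗[ℂ] K :=
  leg23 (Tpow K n) K K X

/-- The flip of the last two factors of `K^{⊗(n+1)} ⊗ K`. -/
noncomputable def swapLastTwo (n : ℕ) :
    (Tpow K (n+1)) ⊗[ℂ] K ≃ₗ[ℂ] (Tpow K (n+1)) ⊗[ℂ] K :=
  swap23 (Tpow K n) K K

/-- `X_{i+1, n+1}`: the unitary `X` on `K ⊗ K` applied to the `i`-th factor (0-based)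
of `K^{⊗n}` and the extra factor `K`, on `K^{⊗n} ⊗ K`.  (Junk value—identity—if `i ≥ n`.) -/
noncomputable def legLast (X : K ⊗[ℂ] K ≃ₗ[ℂ] K ⊗[ℂ] K) :
    (n i : ℕ) → ((Tpow K n) ⊗[ℂ] K ≃ₗ[ℂ] (Tpow K n) ⊗[ℂ] K)
  | 0, _ => LinearEquiv.refl ℂ _
  | (m+1), i =>
      if i = m then lastPair K X m
      else
        (swapLastTwo K m).trans
          ((TensorProduct.congr (legLast X m i) (LinearEquiv.refl ℂ K)).trans
            (swapLastTwo K m))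

/-- The partial product `X_{1,n+1} X_{2,n+1} ⋯ X_{k,n+1}` (operator products read right to
left, so `X_{k,n+1}` acts first). -/
noncomputable def prodLegs (X : K ⊗[ℂ] K ≃ₗ[ℂ] K ⊗[ℂ] K) (n : ℕ) :
    ℕ → ((Tpow K n) ⊗[ℂ] K ≃ₗ[ℂ] (Tpow K n) ⊗[ℂ] K)
  | 0 => LinearEquiv.refl ℂ _
  | (k+1) => (legLast K X n k).trans (prodLegs X n k)

/-- `V^{×n} = V_{1,n+1} V_{2,n+1} ⋯ V_{n,n+1}` on `K^{⊗n} ⊗ K`. -/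
noncomputable def Vbig (X : K ⊗[ℂ] K ≃ₗ[ℂ] K ⊗[ℂ] K) (n : ℕ) :
    (Tpow K n) ⊗[ℂ] K ≃ₗ[ℂ] (Tpow K n) ⊗[ℂ] K :=
  prodLegs K X n n

/-- For a unitary `R` on `K ⊗ K`, the stage operators `R_s` on `K^{⊗(s+1)}`, defined
inductively by `R_0 = 1` and `R_{n+1} = (R_n ⊗ 1)(1_{K^n} ⊗ R)`, i.e.
`R_s = R_{12} R_{23} ⋯ R_{s,s+1}`.  For `R = ϑ` this is the cyclic permutation moving the
last factor to the front. -/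
noncomputable def Rstage (R : K ⊗[ℂ] K ≃ₗ[ℂ] K ⊗[ℂ] K) :
    (n : ℕ) → ((Tpow K (n+1)) ≃ₗ[ℂ] (Tpow K (n+1)))
  | 0 => LinearEquiv.refl ℂ _
  | (m+1) => (lastPair K R m).trans
      (TensorProduct.congr (Rstage R m) (LinearEquiv.refl ℂ K))

end Tpow


section Aux

set_option linter.unusedSectionVars false

lemma ltrans_assoc {M N P Q : Type*} [AddCommGroup M] [Module ℂ M] [AddCommGroup N] [Module ℂ N]
    [AddCommGroup P] [Module ℂ P] [AddCommGroup Q] [Module ℂ Q]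
    (e₁ : M ≃ₗ[ℂ] N) (e₂ : N ≃ₗ[ℂ] P) (e₃ : P ≃ₗ[ℂ] Q) :
    (e₁.trans e₂).trans e₃ = e₁.trans (e₂.trans e₃) := rfl

lemma swap23_swap23 (A B C : Type*) [AddCommGroup A] [Module ℂ A] [AddCommGroup B] [Module ℂ B]
    [AddCommGroup C] [Module ℂ C] :
    (swap23 A B C).trans (swap23 A C B) = LinearEquiv.refl ℂ _ := by
  apply LinearEquiv.toLinearMap_injective
  ext a b c
  simp [swap23]

variable (K : Type) [NormedAddCommGroup K] [InnerProductSpace ℂ K] [CompleteSpace K]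

lemma swapLastTwo_trans_self (m : ℕ) :
    (swapLastTwo K m).trans (swapLastTwo K m) = LinearEquiv.refl ℂ _ :=
  swap23_swap23 (Tpow K m) K K

lemma swapLastTwo_cancel (m : ℕ)
    (e : (Tpow K (m+1)) ⊗[ℂ] K ≃ₗ[ℂ] (Tpow K (m+1)) ⊗[ℂ] K) :
    (swapLastTwo K m).trans ((swapLastTwo K m).trans e) = e := by
  rw [← ltrans_assoc, swapLastTwo_trans_self, LinearEquiv.refl_trans]

lemma swapLastTwo_symm (m : ℕ) : (swapLastTwo K m).symm = swapLastTwo K m := by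
  have h := swapLastTwo_trans_self K m
  calc (swapLastTwo K m).symm
      = ((swapLastTwo K m).trans (swapLastTwo K m)).trans (swapLastTwo K m).symm := by
        rw [h, LinearEquiv.refl_trans]
    _ = (swapLastTwo K m).trans ((swapLastTwo K m).trans (swapLastTwo K m).symm) :=
        ltrans_assoc _ _ _
    _ = swapLastTwo K m := by rw [LinearEquiv.self_trans_symm, LinearEquiv.trans_refl]

lemma leg23_trans' (A : Type*) [AddCommGroup A] [Module ℂ A]
    (X Y : K ⊗[ℂ] K ≃ₗ[ℂ] K ⊗[ℂ] K) :
    leg23 A K K (X.trans Y) = (leg23 A K K X).trans (leg23 A K K Y) := by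
  apply LinearEquiv.toLinearMap_injective
  ext a b c
  simp [leg23]

lemma congr_trans_assoc {A B C D E F G H : Type*}
    [AddCommGroup A] [Module ℂ A] [AddCommGroup B] [Module ℂ B]
    [AddCommGroup C] [Module ℂ C] [AddCommGroup D] [Module ℂ D]
    [AddCommGroup E] [Module ℂ E] [AddCommGroup F] [Module ℂ F]
    [AddCommGroup G] [Module ℂ G] [AddCommGroup H] [Module ℂ H]
    (f : A ≃ₗ[ℂ] B) (g : C ≃ₗ[ℂ] D) (f' : B ≃ₗ[ℂ] E) (g' : D ≃ₗ[ℂ] F)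
    (h : E ⊗[ℂ] F ≃ₗ[ℂ] G ⊗[ℂ] H) :
    (TensorProduct.congr f g).trans ((TensorProduct.congr f' g').trans h)
      = (TensorProduct.congr (f.trans f') (g.trans g')).trans h := by
  rw [TensorProduct.congr_trans, ltrans_assoc]

lemma prodLegs_succ_conj (X : K ⊗[ℂ] K ≃ₗ[ℂ] K ⊗[ℂ] K) (m : ℕ) :
    ∀ k ≤ m, prodLegs K X (m+1) k =
      (swapLastTwo K m).trans
        ((TensorProduct.congr (prodLegs K X m k) (LinearEquiv.refl ℂ K)).trans
          (swapLastTwo K m)) := by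
  intro k hk
  induction k with
  | zero =>
      rw [prodLegs, prodLegs, TensorProduct.congr_refl_refl]
      exact (swapLastTwo_trans_self K m).symm
  | succ k ih =>
      have hk' : k ≤ m := Nat.le_of_succ_le hk
      have hkm : k ≠ m := Nat.ne_of_lt hk
      rw [prodLegs, prodLegs, ih hk']
      simp only [legLast, if_neg hkm]
      have hA : TensorProduct.congr (legLast K X m k ≪≫ₗ prodLegs K X m k)
          (LinearEquiv.refl ℂ K) = (TensorProduct.congr (legLast K X m k)
          (LinearEquiv.refl ℂ K)).trans (TensorProduct.congr (prodLegs K X m k)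
          (LinearEquiv.refl ℂ K)) := by
        rw [← TensorProduct.congr_trans, LinearEquiv.refl_trans]
      rw [hA]
      have key : ∀ a b : (Tpow K (m+1)) ⊗[ℂ] K ≃ₗ[ℂ] (Tpow K (m+1)) ⊗[ℂ] K,
          (swapLastTwo K m).trans (a.trans ((swapLastTwo K m).trans ((swapLastTwo K m).trans
          (b.trans (swapLastTwo K m))))) =
          (swapLastTwo K m).trans ((a.trans b).trans (swapLastTwo K m)) := by
        intro a b; rw [swapLastTwo_cancel]; rfl
      exact key (TensorProduct.congr (legLast K X m k) (LinearEquiv.refl ℂ K))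
        (TensorProduct.congr (prodLegs K X m k) (LinearEquiv.refl ℂ K))

end Aux

open scoped TensorProduct in
/-- **Lemma 3.2 of the paper.** Let `V` be a multiplicative unitary on
`K ⊗ K` and `ϑ` the flip.  With `R_s` denoting the stage operators on `K^{⊗(s+1)}`
(`R_s = R_{12}⋯R_{s,s+1}`, so that `ϑ_s` is the cyclic permutation moving the last factor
to the front), one has `ϑ_s* ∘ (ϑV)_s = V_{1,s+1} V_{2,s+1} ⋯ V_{s,s+1}`. -/
theorem theta_star_thetaV_eq_Vbig
    (K : Type) [NormedAddCommGroup K] [InnerProductSpace ℂ K] [CompleteSpace K]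
    (V : K ⊗[ℂ] K ≃ₗ[ℂ] K ⊗[ℂ] K) (hV : Pentagon K V) (s : ℕ) :
    (Rstage K (V.trans (TensorProduct.comm ℂ K K)) s).trans
        (Rstage K (TensorProduct.comm ℂ K K) s).symm
      = Vbig K V s := by
  induction s with
  | zero => rfl
  | succ s ih =>
      have hlast : lastPair K (TensorProduct.comm ℂ K K) s = swapLastTwo K s := rfl
      have hlv : lastPair K (V.trans (TensorProduct.comm ℂ K K)) s
          = (lastPair K V s).trans (swapLastTwo K s) := by
        rw [← hlast]; exact leg23_trans' K _ V (TensorProduct.comm ℂ K K)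
      rw [Rstage, Rstage]
      show (lastPair K (V.trans (TensorProduct.comm ℂ K K)) s).trans
        ((TensorProduct.congr (Rstage K (V.trans (TensorProduct.comm ℂ K K)) s)
        (LinearEquiv.refl ℂ K)).trans ((TensorProduct.congr
        (Rstage K (TensorProduct.comm ℂ K K) s).symm (LinearEquiv.refl ℂ K)).trans
        (lastPair K (TensorProduct.comm ℂ K K) s).symm)) = _
      rw [congr_trans_assoc, LinearEquiv.trans_refl, ih, hlv, hlast, swapLastTwo_symm]
      have hleg : legLast K V (s+1) s = lastPair K V s := by
        simp [legLast]
      have hR : Vbig K V (s+1) = (lastPair K V s).trans ((swapLastTwo K s).trans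
          ((TensorProduct.congr (Vbig K V s) (LinearEquiv.refl ℂ K)).trans
            (swapLastTwo K s))) := by
        show (legLast K V (s+1) s).trans (prodLegs K V (s+1) s) = _
        rw [prodLegs_succ_conj K V s s le_rfl, hleg]
        rfl
      rw [hR]
      rfl
end
end

section
/- Let H and K be Hilbert spaces and F : B(H) → B(K) a unital normal *-homomorphism. Then there exists a family (ψ_r) of isometries ψ_r : H → K with pairwise orthogonal ranges, ∑_r ψ_r ψ_r* = 1_K (strongly), such that ψ_r T = F(T) ψ_r for all T ∈ B(H) and all r. -/
open ContinuousLinearMap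

universe u

noncomputable section
set_option linter.unusedSectionVars false

section RankOne
variable {H : Type u} [NormedAddCommGroup H] [InnerProductSpace ℂ H] [CompleteSpace H]

local notation "⟪" x ", " y "⟫" => @inner ℂ _ _ x y

/-- rank one operator `|v⟩⟨w|`. -/
def rk (v w : H) : H →L[ℂ] H := (innerSL ℂ w).smulRight v

lemma rk_apply (v w x : H) : rk v w x = ⟪w, x⟫ • v := rfl

lemma rk_mul (v w v' w' : H) : rk v w * rk v' w' = ⟪w, v'⟫ • rk v w' := by
  ext x
  simp [rk_apply, ContinuousLinearMap.mul_apply, inner_smul_right, smul_smul, mul_comm]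

lemma rk_adjoint (v w : H) : adjoint (rk v w) = rk w v := by
  symm
  rw [eq_adjoint_iff]
  intro x y
  simp [rk_apply, inner_smul_left, inner_smul_right, mul_comm]

lemma rk_add_left (v v' w : H) : rk (v + v') w = rk v w + rk v' w := by
  ext x; simp [rk_apply, smul_add]

lemma rk_smul_left (c : ℂ) (v w : H) : rk (c • v) w = c • rk v w := by
  ext x; simp [rk_apply, smul_smul, mul_comm]

lemma rk_comp_left (T : H →L[ℂ] H) (v w : H) : rk (T v) w = T ∘L rk v w := by
  ext x; simp [rk_apply, map_smul]

end RankOne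

set_option maxHeartbeats 2000000 in
/-- **Lemma 2.7.** Let `H` and `K` be Hilbert spaces and
`F : B(H) → B(K)` a unital normal *-homomorphism (normality is expressed by preservation
of strong-operator sums of families of operators).  Then there exists a family `(ψ_r)` of
isometries `ψ_r : H → K` with pairwise orthogonal ranges, with `∑_r ψ_r ψ_r* = 1_K`
strongly, such that `ψ_r T = F(T) ψ_r` for all `T ∈ B(H)` and all `r`. -/
theorem normal_hom_implemented_by_isometries
    (H K : Type u) [NormedAddCommGroup H] [InnerProductSpace ℂ H] [CompleteSpace H]
    [NormedAddCommGroup K] [InnerProductSpace ℂ K] [CompleteSpace K]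
    (F : (H →L[ℂ] H) →⋆ₐ[ℂ] (K →L[ℂ] K))
    (hFnormal : ∀ {ι : Type u} (T : ι → (H →L[ℂ] H)) (S : H →L[ℂ] H),
      (∀ x : H, HasSum (fun i => T i x) (S x)) →
      ∀ y : K, HasSum (fun i => F (T i) y) (F S y)) :
    ∃ (ι : Type u) (ψ : ι → (H →L[ℂ] K)),
      (∀ i (x : H), ‖ψ i x‖ = ‖x‖) ∧
      (∀ i j, i ≠ j → ∀ (x y : H), (inner ℂ (ψ i x) (ψ j y) : ℂ) = 0) ∧
      (∀ y : K, HasSum (fun i => ψ i ((ψ i).adjoint y)) y) ∧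
      (∀ i (T : H →L[ℂ] H), (ψ i) ∘L T = (F T) ∘L (ψ i)) := by
  classical
  by_cases hH : Nontrivial H
  swap
  · -- trivial case: `H` has only `0`, hence `K` too.
    rw [not_nontrivial_iff_subsingleton] at hH
    have h1 : (1 : H →L[ℂ] H) = 0 := by ext x; exact Subsingleton.elim _ _
    have hK1 : (1 : K →L[ℂ] K) = 0 := by rw [← map_one F, h1, map_zero]
    have hK : ∀ y : K, y = 0 := fun y => by
      have : (1 : K →L[ℂ] K) y = (0 : K →L[ℂ] K) y := by rw [hK1]
      simpa using this
    refine ⟨PEmpty, fun i => i.elim, fun i => i.elim, fun i => i.elim, ?_, fun i => i.elim⟩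
    intro y
    rw [hK y, show (fun i : PEmpty.{u+1} =>
      (PEmpty.elim i : H →L[ℂ] K) ((PEmpty.elim i : H →L[ℂ] K).adjoint 0)) = fun _ => (0 : K)
      from funext fun i => i.elim]
    exact hasSum_zero
  -- main case
  obtain ⟨x0, hx0⟩ := exists_ne (0 : H)
  set e : H := ‖x0‖⁻¹ • x0 with he_def
  have he : ‖e‖ = 1 := norm_smul_inv_norm hx0
  have hee : (inner ℂ e e : ℂ) = 1 := by
    rw [inner_self_eq_norm_sq_to_K, he]; norm_num
  set P : K →L[ℂ] K := F (rk e e) with hP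
  haveI : CompleteSpace (LinearMap.ker ((1 - P : K →L[ℂ] K) : K →ₗ[ℂ] K)) :=
    (isClosed_ker (1 - P)).completeSpace_coe
  obtain ⟨w, b, hb⟩ := exists_hilbertBasis ℂ (LinearMap.ker ((1 - P : K →L[ℂ] K) : K →ₗ[ℂ] K))
  set k : w → K := fun r => ((r : LinearMap.ker ((1 - P : K →L[ℂ] K) : K →ₗ[ℂ] K)) : K) with hk
  have hPk : ∀ r : w, P (k r) = k r := by
    intro r
    have hm := (r : LinearMap.ker ((1 - P : K →L[ℂ] K) : K →ₗ[ℂ] K)).2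
    rw [LinearMap.mem_ker] at hm
    rw [coe_coe, sub_apply, ContinuousLinearMap.one_apply] at hm
    exact (sub_eq_zero.mp hm).symm
  have hkk : ∀ r s : w, (inner ℂ (k r) (k s) : ℂ) = if r = s then 1 else 0 := by
    intro r s
    have h1 := orthonormal_iff_ite.mp b.orthonormal r s
    simpa only [congrFun hb r, congrFun hb s, Submodule.coe_inner] using h1
  set ψf : w → H → K := fun r x => F (rk x e) (k r) with hψf
  have hadjF : ∀ v v' : H, adjoint (F (rk v v')) = F (rk v' v) := by
    intro v v'
    rw [← star_eq_adjoint, ← map_star]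
    congr 1
    rw [star_eq_adjoint, rk_adjoint]
  have hinner : ∀ (r s : w) (x y : H),
      (inner ℂ (ψf r x) (ψf s y) : ℂ) = inner ℂ x y * inner ℂ (k r) (k s) := by
    intro r s x y
    calc (inner ℂ (F (rk x e) (k r)) (F (rk y e) (k s)) : ℂ)
        = inner ℂ (k r) (adjoint (F (rk x e)) (F (rk y e) (k s))) :=
          (adjoint_inner_right _ _ _).symm
      _ = inner ℂ (k r) ((F (rk e x) * F (rk y e)) (k s)) := by rw [hadjF]; rfl
      _ = inner ℂ (k r) (F (rk e x * rk y e) (k s)) := by rw [map_mul]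
      _ = inner ℂ (k r) ((inner ℂ x y : ℂ) • (P (k s))) := by
          rw [rk_mul, map_smul, hP]; rfl
      _ = inner ℂ x y * inner ℂ (k r) (k s) := by rw [hPk, inner_smul_right]
  have hnorm : ∀ (r : w) (x : H), ‖ψf r x‖ = ‖x‖ := by
    intro r x
    have h1 := hinner r r x x
    rw [hkk, if_pos rfl, mul_one, inner_self_eq_norm_sq_to_K,
      inner_self_eq_norm_sq_to_K] at h1
    have h2 : ‖ψf r x‖ ^ 2 = ‖x‖ ^ 2 := by exact_mod_cast h1
    nlinarith [norm_nonneg (ψf r x), norm_nonneg x]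
  set ψ : w → (H →L[ℂ] K) := fun r => LinearMap.mkContinuous
    { toFun := ψf r
      map_add' := fun x y => by
        simp only [hψf, rk_add_left, map_add, add_apply]
      map_smul' := fun c x => by
        simp only [hψf, rk_smul_left, map_smul, smul_apply, RingHom.id_apply] }
    1 (fun x => by rw [one_mul]; exact le_of_eq (hnorm r x)) with hψdef
  have hψ : ∀ (r : w) (x : H), ψ r x = ψf r x := fun _ _ => rfl
  have hint : ∀ (r : w) (T : H →L[ℂ] H), ψ r ∘L T = F T ∘L ψ r := by
    intro r T
    ext x
    show F (rk (T x) e) (k r) = F T (F (rk x e) (k r))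
    rw [rk_comp_left]
    have h1 : (T ∘L rk x e) = T * rk x e := rfl
    rw [h1, map_mul, ContinuousLinearMap.mul_apply]
  have horth : ∀ (r s : w), r ≠ s → ∀ x y : H, (inner ℂ (ψ r x) (ψ s y) : ℂ) = 0 := by
    intro r s hrs x y
    rw [hψ, hψ, hinner, hkk, if_neg hrs, mul_zero]
  set V : ∀ _ : w, H →ₗᵢ[ℂ] K := fun r => ⟨(ψ r : H →ₗ[ℂ] K), fun x => hnorm r x⟩ with hVdef
  have hVO : OrthogonalFamily ℂ (fun _ : w => H) V := by
    intro r s hrs x y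
    exact horth r s hrs x y
  refine ⟨w, ψ, fun r x => hnorm r x, horth, ?_, hint⟩
  intro y
  set g : w → H := fun r => (ψ r).adjoint y with hg
  have hbound : ∀ u : Finset w, ∑ r ∈ u, ‖g r‖ ^ 2 ≤ ‖y‖ ^ 2 := by
    intro u
    set S : ℝ := ∑ r ∈ u, ‖g r‖ ^ 2 with hS
    set z : K := ∑ r ∈ u, ψ r (g r) with hz
    have hS0 : 0 ≤ S := Finset.sum_nonneg fun r _ => sq_nonneg _
    have hyz : (inner ℂ y z : ℂ) = (S : ℂ) := by
      rw [hz, inner_sum, hS]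
      rw [Complex.ofReal_sum]
      refine Finset.sum_congr rfl fun r _ => ?_
      have h1 : (inner ℂ y (ψ r (g r)) : ℂ) = inner ℂ (g r) (g r) :=
        (adjoint_inner_left (ψ r) (g r) y).symm
      rw [h1, inner_self_eq_norm_sq_to_K]
      norm_cast
    have hzz : (inner ℂ z z : ℂ) = (S : ℂ) := by
      rw [hz, sum_inner, hS]
      rw [Complex.ofReal_sum]
      refine Finset.sum_congr rfl fun r hr => ?_
      rw [inner_sum, Finset.sum_eq_single_of_mem r hr]
      · rw [hψ, hinner, hkk, if_pos rfl, mul_one, inner_self_eq_norm_sq_to_K]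
        norm_cast
      · intro s hs hsr
        exact horth r s (fun h => hsr h.symm) (g r) (g s)
    have hnz : ‖z‖ ^ 2 = S := by
      have h2 := hzz
      rw [inner_self_eq_norm_sq_to_K] at h2
      have h3 : ((‖z‖ : ℝ) : ℂ) ^ 2 = ((S : ℝ) : ℂ) := h2
      exact_mod_cast h3
    have hle : S ≤ ‖y‖ * ‖z‖ := by
      have h2 : ‖(inner ℂ y z : ℂ)‖ ≤ ‖y‖ * ‖z‖ := norm_inner_le_norm y z
      rw [hyz, Complex.norm_real, Real.norm_eq_abs, abs_of_nonneg hS0] at h2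
      exact h2
    nlinarith [norm_nonneg y, norm_nonneg z]
  have hsum2 : Summable fun r => ‖g r‖ ^ 2 :=
    summable_of_sum_le (fun r => sq_nonneg _) hbound
  have hsum : Summable fun r => V r (g r) :=
    (hVO.summable_iff_norm_sq_summable g).mpr hsum2
  obtain ⟨z, hz⟩ := hsum
  have hz' : HasSum (fun r => ψ r (g r)) z := hz
  have hw : ∀ (s : w) (x : H), (inner ℂ (ψ s x) (y - z) : ℂ) = 0 := by
    intro s x
    have h1 : HasSum (fun r => (inner ℂ (ψ s x) (ψ r (g r)) : ℂ)) (inner ℂ (ψ s x) z) :=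
      hz'.mapL (innerSL ℂ (ψ s x))
    have h2 : HasSum (fun r => (inner ℂ (ψ s x) (ψ r (g r)) : ℂ))
        (inner ℂ (ψ s x) (ψ s (g s))) := by
      apply hasSum_single s
      intro r hrs
      exact horth s r (fun h => hrs h.symm) x (g r)
    have h3 := h1.unique h2
    have h4 : (inner ℂ (ψ s x) (ψ s (g s)) : ℂ) = inner ℂ (ψ s x) y := by
      have h5 : (inner ℂ (ψ s x) (ψ s (g s)) : ℂ) = inner ℂ x (g s) * inner ℂ (k s) (k s) := by
        rw [hψ s x, hψ s (g s)]
        exact hinner s s x (g s)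
      rw [h5, hkk, if_pos rfl, mul_one]
      exact adjoint_inner_right (ψ s) x y
    rw [inner_sub_right, h3, h4, sub_self]
  obtain ⟨wH, bH, hbH⟩ := exists_hilbertBasis ℂ H
  have hone : ∀ x : H, HasSum (fun a : wH => rk (bH a) (bH a) x) ((1 : H →L[ℂ] H) x) := by
    intro x
    have h1 := bH.hasSum_repr x
    simp only [bH.repr_apply_apply] at h1
    simpa [rk_apply, ContinuousLinearMap.one_apply] using h1
  have hnormal := hFnormal (fun a : wH => rk (bH a) (bH a)) 1 hone (y - z)
  rw [map_one, ContinuousLinearMap.one_apply] at hnormal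
  have hzero : ∀ a : wH, F (rk (bH a) (bH a)) (y - z) = 0 := by
    intro a
    have hsplit : rk (bH a) (bH a) = rk (bH a) e * rk e (bH a) := by
      rw [rk_mul, hee, one_smul]
    have hPv : P (F (rk e (bH a)) (y - z)) = F (rk e (bH a)) (y - z) := by
      rw [hP]
      have h5 : F (rk e e) (F (rk e (bH a)) (y - z)) = F (rk e e * rk e (bH a)) (y - z) := by
        rw [map_mul]; rfl
      rw [h5, rk_mul, hee, one_smul]
    have hvmem : F (rk e (bH a)) (y - z) ∈ LinearMap.ker ((1 - P : K →L[ℂ] K) : K →ₗ[ℂ] K) := by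
      rw [LinearMap.mem_ker, coe_coe, sub_apply, ContinuousLinearMap.one_apply, hPv, sub_self]
    have hcoef : ∀ r : w, (inner ℂ (k r) (F (rk e (bH a)) (y - z)) : ℂ) = 0 := by
      intro r
      have h6 : (inner ℂ (k r) (F (rk e (bH a)) (y - z)) : ℂ)
          = inner ℂ (F (rk (bH a) e) (k r)) (y - z) := by
        rw [← hadjF e (bH a)]
        exact (adjoint_inner_left _ _ _).symm
      rw [h6]
      exact hw r (bH a)
    have hv0 : F (rk e (bH a)) (y - z) = 0 := by
      have h7 : (⟨F (rk e (bH a)) (y - z), hvmem⟩ : LinearMap.ker ((1 - P : K →L[ℂ] K) : K →ₗ[ℂ] K)) = 0 := by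
        apply b.repr.injective
        rw [map_zero]
        ext r
        rw [b.repr_apply_apply]
        simp only [congrFun hb r, Submodule.coe_inner, lp.coeFn_zero, Pi.zero_apply]
        exact hcoef r
      exact congrArg Subtype.val h7
    rw [hsplit, map_mul, ContinuousLinearMap.mul_apply, hv0, map_zero]
  have hyz0 : y - z = 0 := by
    simp only [hzero] at hnormal
    exact hnormal.unique hasSum_zero
  have hzy : z = y := (sub_eq_zero.mp hyz0).symm
  subst hzy
  exact hz'
end
end

section
/- Let V be a multiplicative unitary on K ⊗ K. Define H := V*(K ⊗ 1), i.e. the set of operators V* ∘ (ψ ⊗ 1_K) for ψ ∈ K, where ψ ⊗ 1_K : K → K ⊗ K is the map ξ ↦ ψ ⊗ ξ. Then for all ψ₁, ψ₂, ψ₃, ψ₄ ∈ K, the operator (ψ₂ ⊗ 1)* V (1 ⊗ ψ₁)* (1 ⊗ V)(V* ⊗ 1)(ψ₃ ⊗ 1 ⊗ 1) V* (ψ₄ ⊗ 1) on K equals ((ψ₂ ⊗ ψ₁)* V* (ψ₃ ⊗ ψ₄)) · 1_K, a scalar multiple of the identity. -/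
open TensorProduct

noncomputable section

section Stmt9

variable {K : Type*} [NormedAddCommGroup K] [InnerProductSpace ℂ K] [CompleteSpace K]

/-- The adjoint `(ψ ⊗ 1_K)* : K ⊗ K → K` of the map `ξ ↦ ψ ⊗ ξ`; on elementary tensors it
sends `η ⊗ ξ` to `⟪ψ, η⟫ ξ`. -/
noncomputable def annLeft (ψ : K) : K ⊗[ℂ] K →ₗ[ℂ] K :=
  TensorProduct.lift
    (LinearMap.mk₂ ℂ (fun η ξ => (inner ℂ ψ η : ℂ) • ξ)
      (fun η η' ξ => by simp [inner_add_right, add_smul])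
      (fun c η ξ => by simp [inner_smul_right, smul_smul])
      (fun η ξ ξ' => by simp)
      (fun c η ξ => by rw [smul_comm]))

/-- The linear functional `(ψ₂ ⊗ ψ₁)* : K ⊗ K → ℂ`, sending `a ⊗ b` to `⟪ψ₂,a⟫⟪ψ₁,b⟫`. -/
noncomputable def dualTensor2 (ψ₂ ψ₁ : K) : K ⊗[ℂ] K →ₗ[ℂ] ℂ :=
  TensorProduct.lift
    (LinearMap.mk₂ ℂ (fun a b => (inner ℂ ψ₂ a : ℂ) * (inner ℂ ψ₁ b : ℂ))
      (fun a a' b => by simp [inner_add_right, add_mul])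
      (fun c a b => by simp [inner_smul_right]; ring)
      (fun a b b' => by simp [inner_add_right, mul_add])
      (fun c a b => by simp [inner_smul_right]; ring))

lemma annLeft_tmul (ψ η ξ : K) : annLeft ψ (η ⊗ₜ[ℂ] ξ) = (inner ℂ ψ η : ℂ) • ξ := rfl

lemma dualTensor2_tmul (ψ₂ ψ₁ a b : K) :
    dualTensor2 ψ₂ ψ₁ (a ⊗ₜ[ℂ] b) = (inner ℂ ψ₂ a : ℂ) * (inner ℂ ψ₁ b : ℂ) := rfl

/-- Pentagon consequence: `V₂₃ V₁₂⁻¹ V₂₃⁻¹ = V₁₃⁻¹ V₁₂⁻¹`. -/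
lemma pentagon_key (V : K ⊗[ℂ] K ≃ₗ[ℂ] K ⊗[ℂ] K) (hV : Pentagon K V)
    (z : (K ⊗[ℂ] K) ⊗[ℂ] K) :
    (leg23 K K K V) ((leg12 K K K V).symm ((leg23 K K K V).symm z)) =
      (leg13 K K K V).symm ((leg12 K K K V).symm z) := by
  apply (leg13 K K K V).injective
  rw [LinearEquiv.apply_symm_apply]
  apply (leg12 K K K V).injective
  have h := congrArg
    (fun f : (K ⊗[ℂ] K) ⊗[ℂ] K ≃ₗ[ℂ] (K ⊗[ℂ] K) ⊗[ℂ] K =>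
      f ((leg12 K K K V).symm ((leg23 K K K V).symm z))) hV
  simp only [LinearEquiv.trans_apply] at h
  rw [h]
  simp

/-- The scalar-extraction map `G : (a ⊗ b) ⊗ c ↦ ⟪ψ₂,a⟫⟪ψ₁,b⟫ • c`. -/
noncomputable def gMap (ψ₂ ψ₁ : K) : (K ⊗[ℂ] K) ⊗[ℂ] K →ₗ[ℂ] K :=
  (TensorProduct.lid ℂ K).toLinearMap ∘ₗ LinearMap.rTensor K (dualTensor2 ψ₂ ψ₁)

lemma gMap_tmul (ψ₂ ψ₁ a b c : K) :
    gMap ψ₂ ψ₁ ((a ⊗ₜ[ℂ] b) ⊗ₜ[ℂ] c) = ((inner ℂ ψ₂ a : ℂ) * (inner ℂ ψ₁ b : ℂ)) • c := by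
  simp [gMap, dualTensor2_tmul]

lemma gMap_swap23 (ψ₂ ψ₁ : K) (y : K ⊗[ℂ] K) (b : K) :
    gMap ψ₂ ψ₁ ((swap23 K K K) (y ⊗ₜ[ℂ] b)) = (inner ℂ ψ₁ b : ℂ) • annLeft ψ₂ y := by
  induction y using TensorProduct.induction_on with
  | zero => simp [swap23]
  | tmul s t =>
      simp [swap23, gMap_tmul, annLeft_tmul, smul_smul, mul_comm]
  | add x y hx hy =>
      simp only [add_tmul, map_add, hx, hy, smul_add]

lemma fMap_eq (V : K ⊗[ℂ] K ≃ₗ[ℂ] K ⊗[ℂ] K) (ψ₁ ψ₂ : K) (w : (K ⊗[ℂ] K) ⊗[ℂ] K) :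
    annLeft ψ₂ (V (LinearMap.lTensor K (annLeft ψ₁) ((TensorProduct.assoc ℂ K K K) w))) =
      gMap ψ₂ ψ₁ ((leg13 K K K V) w) := by
  induction w using TensorProduct.induction_on with
  | zero => simp
  | tmul x c =>
      induction x using TensorProduct.induction_on with
      | zero => simp [zero_tmul]
      | tmul a b =>
          have h13 : (leg13 K K K V) ((a ⊗ₜ[ℂ] b) ⊗ₜ[ℂ] c) =
              (swap23 K K K) ((V (a ⊗ₜ[ℂ] c)) ⊗ₜ[ℂ] b) := by
            simp [leg13, leg12, swap23]
          rw [h13, gMap_swap23]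
          simp [annLeft_tmul, smul_smul, map_smul]
      | add x y hx hy =>
          simp only [add_tmul, map_add, hx, hy]
  | add x y hx hy =>
      simp only [map_add, hx, hy]

/-- **from Proposition 4.3.** Let `V` be a multiplicative unitary on `K ⊗ K`.
Then for all `ψ₁, ψ₂, ψ₃, ψ₄ ∈ K`, the operator
`(ψ₂ ⊗ 1)* V (1 ⊗ ψ₁)* (1 ⊗ V) (V* ⊗ 1) (ψ₃ ⊗ 1 ⊗ 1) V* (ψ₄ ⊗ 1)` on `K`
is the scalar `(ψ₂ ⊗ ψ₁)* V* (ψ₃ ⊗ ψ₄)` times the identity (which verifies that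
`H := V*(K ⊗ 1)` is an ambidextrous Hilbert space of intertwiners). -/
theorem ambidextrous_scalar_identity
    (V : K ⊗[ℂ] K ≃ₗ[ℂ] K ⊗[ℂ] K) (hV : Pentagon K V) (ψ₁ ψ₂ ψ₃ ψ₄ : K) :
    (annLeft ψ₂) ∘ₗ V.toLinearMap ∘ₗ
        (LinearMap.lTensor K (annLeft ψ₁)) ∘ₗ
        (LinearMap.lTensor K V.toLinearMap) ∘ₗ
        ((TensorProduct.assoc ℂ K K K).toLinearMap ∘ₗ
          (LinearMap.rTensor K V.symm.toLinearMap) ∘ₗ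
          (TensorProduct.assoc ℂ K K K).symm.toLinearMap) ∘ₗ
        (TensorProduct.mk ℂ K (K ⊗[ℂ] K) ψ₃) ∘ₗ
        V.symm.toLinearMap ∘ₗ
        (TensorProduct.mk ℂ K K ψ₄ : K →ₗ[ℂ] K ⊗[ℂ] K)
      = (dualTensor2 ψ₂ ψ₁ (V.symm (ψ₃ ⊗ₜ[ℂ] ψ₄))) • (LinearMap.id : K →ₗ[ℂ] K) := by
  ext ξ
  simp only [LinearMap.comp_apply, TensorProduct.mk_apply, LinearEquiv.coe_coe,
    LinearMap.smul_apply, LinearMap.id_apply]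
  set Z : (K ⊗[ℂ] K) ⊗[ℂ] K := (ψ₃ ⊗ₜ[ℂ] ψ₄) ⊗ₜ[ℂ] ξ with hZ
  -- Step A: assoc.symm (ψ₃ ⊗ V.symm (ψ₄ ⊗ ξ)) = (leg23 V).symm Z
  have stepA : (TensorProduct.assoc ℂ K K K).symm (ψ₃ ⊗ₜ[ℂ] (V.symm (ψ₄ ⊗ₜ[ℂ] ξ))) =
      (leg23 K K K V).symm Z := by
    rw [LinearEquiv.eq_symm_apply]
    simp [leg23, hZ]
  -- Step B: rTensor V.symm = (leg12 V).symm pointwise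
  have stepB : ∀ x : (K ⊗[ℂ] K) ⊗[ℂ] K,
      LinearMap.rTensor K V.symm.toLinearMap x = (leg12 K K K V).symm x := by
    intro x
    induction x using TensorProduct.induction_on with
    | zero => simp
    | tmul y c => simp [leg12, TensorProduct.congr]
    | add x y hx hy => simp only [map_add, hx, hy]
  -- Step C: lTensor V ∘ assoc = assoc ∘ leg23 V pointwise
  have stepC : ∀ x : (K ⊗[ℂ] K) ⊗[ℂ] K,
      LinearMap.lTensor K V.toLinearMap ((TensorProduct.assoc ℂ K K K) x) =
        (TensorProduct.assoc ℂ K K K) ((leg23 K K K V) x) := by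
    intro x
    induction x using TensorProduct.induction_on with
    | zero => simp
    | tmul y c =>
        induction y using TensorProduct.induction_on with
        | zero => simp [zero_tmul]
        | tmul a b => simp [leg23]
        | add x y hx hy => simp only [add_tmul, map_add, hx, hy]
    | add x y hx hy => simp only [map_add, hx, hy]
  rw [stepA, stepB, stepC, pentagon_key V hV]
  have h12 : (leg12 K K K V).symm Z = (V.symm (ψ₃ ⊗ₜ[ℂ] ψ₄)) ⊗ₜ[ℂ] ξ := by
    rw [LinearEquiv.symm_apply_eq]
    simp [leg12, hZ]
  rw [h12]
  set p := V.symm (ψ₃ ⊗ₜ[ℂ] ψ₄) with hp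
  rw [show (TensorProduct.assoc ℂ K K K) ((leg13 K K K V).symm (p ⊗ₜ[ℂ] ξ)) =
      (TensorProduct.assoc ℂ K K K) ((leg13 K K K V).symm (p ⊗ₜ[ℂ] ξ)) from rfl]
  have := fMap_eq V ψ₁ ψ₂ ((leg13 K K K V).symm (p ⊗ₜ[ℂ] ξ))
  rw [LinearEquiv.apply_symm_apply] at this
  rw [this]
  -- now compute gMap on p ⊗ ξ by induction on p
  induction p using TensorProduct.induction_on with
  | zero => simp [gMap]
  | tmul a b => simp [gMap_tmul, dualTensor2_tmul]
  | add x y hx hy => simp only [add_tmul, map_add, hx, hy, add_smul]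

end Stmt9
end
end

section
/- Let K be a category of Hilbert spaces with objects indexed by ℕ, with (0,0) = ℂ, equipped with a normal *-functor F with F(n) = n+1 on objects. Define F̂ by F̂(X) = ∑_i F^n(ψ_{i,1}) ∘ X ∘ F^m(ψ_{i,1})* for X ∈ (m,n), where (ψ_{i,1}) is an orthonormal basis of the Hilbert space (0,1). Then F̂ is a normal *-functor with F̂(n) = n+1 which commutes with F, and the double-hat recovers F: F̂̂ = F. -/
open ContinuousLinearMap

set_option linter.unusedSectionVars false
set_option maxHeartbeats 1000000

noncomputable section

variable {K : ℕ → Type*} [∀ n, NormedAddCommGroup (K n)] [∀ n, InnerProductSpace ℂ (K n)]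
  [∀ n, CompleteSpace (K n)]

/-- Transport of an operator along equalities of the indices. -/
def castCLM {a b c d : ℕ} (h1 : a = b) (h2 : c = d) (f : K a →L[ℂ] K c) :
    K b →L[ℂ] K d :=
  cast (by rw [h1, h2]) f

/-- The `k`-th iterate `F^k` of a shift functor `F` on the category of Hilbert spaces with
objects `K n`, `n ∈ ℕ`, acting on objects by `n ↦ n + 1`. -/
def Fpow (F : ∀ m n : ℕ, (K m →L[ℂ] K n) → (K (m+1) →L[ℂ] K (n+1))) :
    (k : ℕ) → (m n : ℕ) → (K m →L[ℂ] K n) → (K (m + k) →L[ℂ] K (n + k))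
  | 0, _, _, X => X
  | (k+1), m, n, X => F (m + k) (n + k) (Fpow F k m n X)

/-- `G` is the "hat" of `F` with respect to the orthonormal basis `e` of the Hilbert space
`(0,1)`:  `G(X) = ∑ᵢ Fⁿ(ψᵢ) ∘ X ∘ Fᵐ(ψᵢ)*` for `X ∈ (m,n)`, with strong convergence. -/
def IsHatOf {ι : Type*} (F G : ∀ m n : ℕ, (K m →L[ℂ] K n) → (K (m+1) →L[ℂ] K (n+1)))
    (e : ι → (K 0 →L[ℂ] K 1)) : Prop :=
  ∀ (m n : ℕ) (X : K m →L[ℂ] K n) (y : K (m+1)),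
    HasSum
      (fun i =>
        (castCLM (Nat.zero_add n) (Nat.add_comm 1 n) (Fpow F n 0 1 (e i)))
          (X ((adjoint (castCLM (Nat.zero_add m) (Nat.add_comm 1 m) (Fpow F m 0 1 (e i)))) y)))
      ((G m n X) y)

/-- `F` is a normal *-functor acting as `n ↦ n+1` on objects: a shift. -/
structure IsShift (F : ∀ m n : ℕ, (K m →L[ℂ] K n) → (K (m+1) →L[ℂ] K (n+1))) : Prop where
  map_id : ∀ n, F n n (ContinuousLinearMap.id ℂ (K n)) = ContinuousLinearMap.id ℂ (K (n+1))
  map_comp : ∀ (m n p : ℕ) (X : K m →L[ℂ] K n) (Y : K n →L[ℂ] K p),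
    F m p (Y ∘L X) = F n p Y ∘L F m n X
  map_add : ∀ (m n : ℕ) (X Y : K m →L[ℂ] K n), F m n (X + Y) = F m n X + F m n Y
  map_smul : ∀ (m n : ℕ) (c : ℂ) (X : K m →L[ℂ] K n), F m n (c • X) = c • F m n X
  map_star : ∀ (m n : ℕ) (X : K m →L[ℂ] K n), F n m (adjoint X) = adjoint (F m n X)
  normal : ∀ (m n : ℕ) {ι' : Type} (T : ι' → (K m →L[ℂ] K n)) (S : K m →L[ℂ] K n),
    (∀ x, HasSum (fun j => T j x) (S x)) → ∀ y, HasSum (fun j => F m n (T j) y) (F m n S y)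

/- ### Auxiliary development -/

theorem apply_castCLM {a b c d : ℕ} (h1 : a = b) (h2 : c = d)
    (G : ∀ m n : ℕ, (K m →L[ℂ] K n) → (K (m+1) →L[ℂ] K (n+1))) (f : K a →L[ℂ] K c) :
    G b d (castCLM h1 h2 f) = castCLM (by rw [h1]) (by rw [h2]) (G a c f) := by
  subst h1; subst h2; rfl

section Aux

open scoped ComplexInnerProductSpace

variable {ι : Type} [DecidableEq ι]
variable (e : ι → (K 0 →L[ℂ] K 1))
variable (G : ∀ m n : ℕ, (K m →L[ℂ] K n) → (K (m+1) →L[ℂ] K (n+1)))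
variable (hG : IsShift G)
variable (horth : ∀ i j, (adjoint (e i)) ∘L (e j)
      = if i = j then ContinuousLinearMap.id ℂ (K 0) else 0)
variable (hcomplete : ∀ x : K 1, HasSum (fun i => e i ((adjoint (e i)) x)) x)

/-- `F^m(ψᵢ)`, as a map `K m → K (m+1)`. -/
def Eb (m : ℕ) (i : ι) : K m →L[ℂ] K (m+1) :=
  castCLM (Nat.zero_add m) (Nat.add_comm 1 m) (Fpow G m 0 1 (e i))

theorem Eb_zero (i : ι) : Eb e G 0 i = e i := rfl

theorem Eb_succ (m : ℕ) (i : ι) : Eb e G (m+1) i = G m (m+1) (Eb e G m i) := by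
  simp only [Eb]
  rw [apply_castCLM (Nat.zero_add m) (Nat.add_comm 1 m) G (Fpow G m 0 1 (e i))]
  rfl

include hG horth hcomplete

theorem shift_zero (m n : ℕ) : G m n 0 = 0 := by
  have h := hG.map_smul m n 0 0
  rwa [zero_smul, zero_smul] at h

theorem Eb_orth (m : ℕ) (i j : ι) :
    adjoint (Eb e G m i) ∘L Eb e G m j
      = if i = j then ContinuousLinearMap.id ℂ (K m) else 0 := by
  induction m with
  | zero => exact horth i j
  | succ m ih =>
    rw [Eb_succ, Eb_succ, ← hG.map_star, ← hG.map_comp, ih]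
    by_cases h : i = j
    · simp only [if_pos h, hG.map_id]
    · simp only [if_neg h, shift_zero e G hG horth hcomplete]

theorem Eb_inner (m : ℕ) (i j : ι) (x y : K m) :
    ⟪Eb e G m i x, Eb e G m j y⟫ = if i = j then ⟪x, y⟫ else 0 := by
  rw [← ContinuousLinearMap.adjoint_inner_right, ← ContinuousLinearMap.comp_apply,
    Eb_orth e G hG horth hcomplete m i j]
  by_cases h : i = j
  · simp [h]
  · simp [h]

/-- `Eb` as a linear isometry. -/
def EbIso (m : ℕ) (i : ι) : K m →ₗᵢ[ℂ] K (m+1) :=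
  (Eb e G m i).toLinearMap.isometryOfInner (fun x y => by
    simpa using Eb_inner e G hG horth hcomplete m i i x y)

theorem EbIso_apply (m : ℕ) (i : ι) (x : K m) :
    EbIso e G hG horth hcomplete m i x = Eb e G m i x := rfl

theorem Eb_orthogonalFamily (m : ℕ) :
    OrthogonalFamily ℂ (fun _ : ι => K m) (fun i => EbIso e G hG horth hcomplete m i) := by
  intro i j hij x y
  rw [EbIso_apply, EbIso_apply, Eb_inner e G hG horth hcomplete m i j, if_neg hij]

theorem Eb_hasSum_norm_sq (m : ℕ) {f : ι → K m} {s : K (m+1)}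
    (h : HasSum (fun i => Eb e G m i (f i)) s) :
    HasSum (fun i => ‖f i‖^2) (‖s‖^2) := by
  have ht : Filter.Tendsto (fun J : Finset ι => ∑ i ∈ J, Eb e G m i (f i))
      Filter.atTop (nhds s) := h
  have ht2 := ht.norm.pow 2
  have heq : ∀ J : Finset ι, ‖∑ i ∈ J, Eb e G m i (f i)‖^2 = ∑ i ∈ J, ‖f i‖^2 := fun J =>
    (Eb_orthogonalFamily e G hG horth hcomplete m).norm_sum f J
  exact ht2.congr heq

theorem Eb_summable_iff (m : ℕ) (f : ι → K m) :
    Summable (fun i => Eb e G m i (f i)) ↔ Summable (fun i => ‖f i‖^2) :=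
  (Eb_orthogonalFamily e G hG horth hcomplete m).summable_iff_norm_sq_summable f

theorem Eb_complete (m : ℕ) :
    ∀ y : K (m+1), HasSum (fun i => Eb e G m i (adjoint (Eb e G m i) y)) y := by
  induction m with
  | zero => exact hcomplete
  | succ m ih =>
    intro y
    have h1 : ∀ x : K (m+1), HasSum (fun i => (Eb e G m i ∘L adjoint (Eb e G m i)) x)
        ((ContinuousLinearMap.id ℂ (K (m+1))) x) := fun x => ih x
    have h2 := hG.normal (m+1) (m+1) _ _ h1 y
    rw [hG.map_id] at h2
    have hfun : (fun i => G (m+1) (m+1) (Eb e G m i ∘L adjoint (Eb e G m i)) y)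
        = fun i => Eb e G (m+1) i (adjoint (Eb e G (m+1) i) y) := by
      funext i
      rw [hG.map_comp, hG.map_star, ← Eb_succ e G m i]
      rfl
    rw [hfun] at h2
    exact h2

theorem coeff_hasSum (m : ℕ) (y : K (m+1)) :
    HasSum (fun i => ‖adjoint (Eb e G m i) y‖^2) (‖y‖^2) :=
  Eb_hasSum_norm_sq e G hG horth hcomplete m (Eb_complete e G hG horth hcomplete m y)

theorem hat_term_summable (m n : ℕ) (X : K m →L[ℂ] K n) (y : K (m+1)) :
    Summable (fun i => Eb e G n i (X (adjoint (Eb e G m i) y))) := by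
  rw [Eb_summable_iff e G hG horth hcomplete]
  refine Summable.of_nonneg_of_le (fun i => sq_nonneg _) (fun i => ?_)
    (((coeff_hasSum e G hG horth hcomplete m y).mul_left (‖X‖^2)).summable)
  calc ‖X (adjoint (Eb e G m i) y)‖^2
      ≤ (‖X‖ * ‖adjoint (Eb e G m i) y‖)^2 := by
        apply pow_le_pow_left₀ (norm_nonneg _) (X.le_opNorm _)
    _ = ‖X‖^2 * ‖adjoint (Eb e G m i) y‖^2 := mul_pow _ _ _

/-- The "hat" of the shift functor `G`. -/
def hatCLM (m n : ℕ) (X : K m →L[ℂ] K n) : K (m+1) →L[ℂ] K (n+1) :=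
  LinearMap.mkContinuous
    { toFun := fun y => ∑' i, Eb e G n i (X (adjoint (Eb e G m i) y))
      map_add' := fun y z => by
        have hy := (hat_term_summable e G hG horth hcomplete m n X y).hasSum
        have hz := (hat_term_summable e G hG horth hcomplete m n X z).hasSum
        have h : HasSum (fun i => Eb e G n i (X (adjoint (Eb e G m i) (y + z))))
            ((∑' i, Eb e G n i (X (adjoint (Eb e G m i) y)))
              + ∑' i, Eb e G n i (X (adjoint (Eb e G m i) z))) := by
          simpa [map_add] using hy.add hz
        exact h.tsum_eq
      map_smul' := fun c y => by
        have hy := (hat_term_summable e G hG horth hcomplete m n X y).hasSum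
        have h : HasSum (fun i => Eb e G n i (X (adjoint (Eb e G m i) (c • y))))
            (c • ∑' i, Eb e G n i (X (adjoint (Eb e G m i) y))) := by
          simpa [map_smul] using hy.const_smul c
        exact h.tsum_eq }
    ‖X‖ (fun y => by
      have hs := Eb_hasSum_norm_sq e G hG horth hcomplete n
        ((hat_term_summable e G hG horth hcomplete m n X y).hasSum)
      have hb : ‖∑' i, Eb e G n i (X (adjoint (Eb e G m i) y))‖^2 ≤ ‖X‖^2 * ‖y‖^2 := by
        refine hasSum_le (fun i => ?_) hs
          ((coeff_hasSum e G hG horth hcomplete m y).mul_left (‖X‖^2))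
        calc ‖X (adjoint (Eb e G m i) y)‖^2
            ≤ (‖X‖ * ‖adjoint (Eb e G m i) y‖)^2 := by
              apply pow_le_pow_left₀ (norm_nonneg _) (X.le_opNorm _)
          _ = ‖X‖^2 * ‖adjoint (Eb e G m i) y‖^2 := mul_pow _ _ _
      have hb2 : ‖∑' i, Eb e G n i (X (adjoint (Eb e G m i) y))‖^2 ≤ (‖X‖ * ‖y‖)^2 := by
        rwa [mul_pow]
      exact le_of_pow_le_pow_left₀ two_ne_zero
        (mul_nonneg (norm_nonneg _) (norm_nonneg _)) hb2)

theorem hatCLM_hasSum (m n : ℕ) (X : K m →L[ℂ] K n) (y : K (m+1)) :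
    HasSum (fun i => Eb e G n i (X (adjoint (Eb e G m i) y)))
      (hatCLM e G hG horth hcomplete m n X y) :=
  (hat_term_summable e G hG horth hcomplete m n X y).hasSum

theorem hat_coeff (m n : ℕ) (X : K m →L[ℂ] K n) (y : K (m+1)) (i : ι) :
    adjoint (Eb e G n i) (hatCLM e G hG horth hcomplete m n X y)
      = X (adjoint (Eb e G m i) y) := by
  have h := (hatCLM_hasSum e G hG horth hcomplete m n X y).mapL (adjoint (Eb e G n i))
  have h2 : HasSum (fun j => if j = i then X (adjoint (Eb e G m i) y) else 0)
      (X (adjoint (Eb e G m i) y)) := hasSum_ite_eq i _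
  have hfun : (fun j => adjoint (Eb e G n i) (Eb e G n j (X (adjoint (Eb e G m j) y))))
      = fun j => if j = i then X (adjoint (Eb e G m i) y) else 0 := by
    funext j
    rw [← ContinuousLinearMap.comp_apply, Eb_orth e G hG horth hcomplete n i j]
    by_cases hij : j = i
    · subst hij; simp
    · rw [if_neg (fun h' => hij h'.symm), if_neg hij]
      rfl
  rw [hfun] at h
  exact h.unique h2

theorem hat_id (n : ℕ) :
    hatCLM e G hG horth hcomplete n n (ContinuousLinearMap.id ℂ (K n))
      = ContinuousLinearMap.id ℂ (K (n+1)) := by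
  ext y
  have h1 := hatCLM_hasSum e G hG horth hcomplete n n (ContinuousLinearMap.id ℂ (K n)) y
  simp only [ContinuousLinearMap.id_apply] at h1 ⊢
  exact h1.unique (Eb_complete e G hG horth hcomplete n y)

theorem hat_comp (m n p : ℕ) (X : K m →L[ℂ] K n) (Y : K n →L[ℂ] K p) :
    hatCLM e G hG horth hcomplete m p (Y ∘L X)
      = hatCLM e G hG horth hcomplete n p Y ∘L hatCLM e G hG horth hcomplete m n X := by
  ext y
  have h1 := hatCLM_hasSum e G hG horth hcomplete n p Y
    (hatCLM e G hG horth hcomplete m n X y)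
  simp only [hat_coeff e G hG horth hcomplete] at h1
  have h2 := hatCLM_hasSum e G hG horth hcomplete m p (Y ∘L X) y
  simp only [ContinuousLinearMap.comp_apply] at h2 ⊢
  exact h2.unique h1

theorem hat_add (m n : ℕ) (X Y : K m →L[ℂ] K n) :
    hatCLM e G hG horth hcomplete m n (X + Y)
      = hatCLM e G hG horth hcomplete m n X + hatCLM e G hG horth hcomplete m n Y := by
  ext y
  have h1 := hatCLM_hasSum e G hG horth hcomplete m n X y
  have h2 := hatCLM_hasSum e G hG horth hcomplete m n Y y
  have h3 := hatCLM_hasSum e G hG horth hcomplete m n (X + Y) y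
  simp only [ContinuousLinearMap.add_apply, map_add] at h3 ⊢
  exact h3.unique (h1.add h2)

theorem hat_smul (m n : ℕ) (c : ℂ) (X : K m →L[ℂ] K n) :
    hatCLM e G hG horth hcomplete m n (c • X)
      = c • hatCLM e G hG horth hcomplete m n X := by
  ext y
  have h1 := hatCLM_hasSum e G hG horth hcomplete m n X y
  have h3 := hatCLM_hasSum e G hG horth hcomplete m n (c • X) y
  simp only [ContinuousLinearMap.smul_apply, map_smul] at h3 ⊢
  exact h3.unique (h1.const_smul c)

theorem hat_star (m n : ℕ) (X : K m →L[ℂ] K n) :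
    hatCLM e G hG horth hcomplete n m (adjoint X)
      = adjoint (hatCLM e G hG horth hcomplete m n X) := by
  rw [ContinuousLinearMap.eq_adjoint_iff]
  intro z w
  have h1 := (hatCLM_hasSum e G hG horth hcomplete n m (adjoint X) z).mapL (innerSL ℂ w)
  have h1s := h1.star
  have h2 := (hatCLM_hasSum e G hG horth hcomplete m n X w).mapL (innerSL ℂ z)
  have hfun : (fun i => star ((innerSL ℂ w) (Eb e G m i ((adjoint X) (adjoint (Eb e G n i) z)))))
      = fun i => (innerSL ℂ z) (Eb e G n i (X (adjoint (Eb e G m i) w))) := by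
    funext i
    simp only [innerSL_apply_apply]
    rw [← starRingEnd_apply, inner_conj_symm]
    rw [← ContinuousLinearMap.adjoint_inner_right (Eb e G m i),
      ContinuousLinearMap.adjoint_inner_left X,
      ContinuousLinearMap.adjoint_inner_left (Eb e G n i)]
  rw [hfun] at h1s
  have final := h1s.unique h2
  simp only [innerSL_apply_apply] at final
  rwa [← starRingEnd_apply, inner_conj_symm] at final

open Filter

theorem partial_sums_bounded {m n : ℕ} {ι' : Type} (T : ι' → (K m →L[ℂ] K n))
    (S : K m →L[ℂ] K n) (hT : ∀ x, HasSum (fun j => T j x) (S x)) :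
    ∃ C : ℝ, ∀ J : Finset ι', ‖∑ j ∈ J, T j‖ ≤ C := by
  classical
  have hbdd : ∀ x : K m, ∃ C : ℝ, ∀ J : Finset ι', ‖(∑ j ∈ J, T j) x‖ ≤ C := by
    intro x
    have h : Tendsto (fun J : Finset ι' => ∑ j ∈ J, T j x) atTop (nhds (S x)) := hT x
    obtain ⟨J₀, hJ₀⟩ := Filter.eventually_atTop.mp
      (h.eventually (Metric.ball_mem_nhds (S x) one_pos))
    refine ⟨‖S x‖ + 1 + ∑ j ∈ J₀, ‖T j x‖, fun J => ?_⟩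
    have hsub : J₀ ≤ J ∪ J₀ := Finset.subset_union_right
    have h1 : ‖∑ j ∈ J ∪ J₀, T j x‖ ≤ ‖S x‖ + 1 := by
      have hball := hJ₀ (J ∪ J₀) hsub
      rw [dist_eq_norm] at hball
      calc ‖∑ j ∈ J ∪ J₀, T j x‖
          = ‖(∑ j ∈ J ∪ J₀, T j x - S x) + S x‖ := by rw [sub_add_cancel]
        _ ≤ ‖∑ j ∈ J ∪ J₀, T j x - S x‖ + ‖S x‖ := norm_add_le _ _
        _ ≤ 1 + ‖S x‖ := by
            have := le_of_lt hball
            linarith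
        _ = ‖S x‖ + 1 := by ring
    have hsplit : ∑ j ∈ J, T j x = ∑ j ∈ J ∪ J₀, T j x - ∑ j ∈ J₀ \ J, T j x := by
      have : J ∪ J₀ = J ∪ (J₀ \ J) := (Finset.union_sdiff_self_eq_union).symm
      rw [this, Finset.sum_union Finset.disjoint_sdiff]
      abel
    have h2 : ‖∑ j ∈ J₀ \ J, T j x‖ ≤ ∑ j ∈ J₀, ‖T j x‖ := by
      calc ‖∑ j ∈ J₀ \ J, T j x‖ ≤ ∑ j ∈ J₀ \ J, ‖T j x‖ := norm_sum_le _ _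
        _ ≤ ∑ j ∈ J₀, ‖T j x‖ := Finset.sum_le_sum_of_subset_of_nonneg
            (Finset.sdiff_subset) (fun _ _ _ => norm_nonneg _)
    have h3 : ‖(∑ j ∈ J, T j) x‖ = ‖∑ j ∈ J, T j x‖ := by
      rw [ContinuousLinearMap.sum_apply]
    rw [h3, hsplit]
    calc ‖∑ j ∈ J ∪ J₀, T j x - ∑ j ∈ J₀ \ J, T j x‖
        ≤ ‖∑ j ∈ J ∪ J₀, T j x‖ + ‖∑ j ∈ J₀ \ J, T j x‖ := norm_sub_le _ _
      _ ≤ (‖S x‖ + 1) + ∑ j ∈ J₀, ‖T j x‖ := add_le_add h1 h2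
  exact banach_steinhaus hbdd

theorem hat_sub (m n : ℕ) (X Y : K m →L[ℂ] K n) :
    hatCLM e G hG horth hcomplete m n (X - Y)
      = hatCLM e G hG horth hcomplete m n X - hatCLM e G hG horth hcomplete m n Y :=
  (AddMonoidHom.mk' (hatCLM e G hG horth hcomplete m n)
    (hat_add e G hG horth hcomplete m n)).map_sub X Y

theorem hat_finsum {m n : ℕ} {ι' : Type} (T : ι' → (K m →L[ℂ] K n)) (J : Finset ι') :
    hatCLM e G hG horth hcomplete m n (∑ j ∈ J, T j)
      = ∑ j ∈ J, hatCLM e G hG horth hcomplete m n (T j) :=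
  map_sum (AddMonoidHom.mk' (hatCLM e G hG horth hcomplete m n)
    (hat_add e G hG horth hcomplete m n)) T J

theorem hat_normal (m n : ℕ) {ι' : Type} (T : ι' → (K m →L[ℂ] K n))
    (S : K m →L[ℂ] K n) (hT : ∀ x, HasSum (fun j => T j x) (S x)) (y : K (m+1)) :
    HasSum (fun j => hatCLM e G hG horth hcomplete m n (T j) y)
      (hatCLM e G hG horth hcomplete m n S y) := by
  classical
  obtain ⟨C, hC⟩ := partial_sums_bounded e G hG horth hcomplete T S hT
  set D : ℝ := C + ‖S‖ with hD
  have hDnn : 0 ≤ D := by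
    have h0 := hC ∅
    simp only [Finset.sum_empty] at h0
    have : (0:ℝ) ≤ C := le_trans (norm_nonneg _) h0
    positivity
  have hRle : ∀ J : Finset ι', ‖S - ∑ j ∈ J, T j‖ ≤ D := fun J => by
    calc ‖S - ∑ j ∈ J, T j‖ ≤ ‖S‖ + ‖∑ j ∈ J, T j‖ := norm_sub_le _ _
      _ ≤ ‖S‖ + C := by have := hC J; linarith
      _ = D := by rw [hD]; ring
  set f : ι → K m := fun i => adjoint (Eb e G m i) y with hf
  have hy : HasSum (fun i => ‖f i‖^2) (‖y‖^2) := coeff_hasSum e G hG horth hcomplete m y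
  show Tendsto (fun J : Finset ι' => ∑ j ∈ J, hatCLM e G hG horth hcomplete m n (T j) y)
    atTop (nhds (hatCLM e G hG horth hcomplete m n S y))
  rw [Metric.tendsto_atTop]
  intro ε hε
  set δ : ℝ := ε^2 / (2 * (D^2 + 1)) with hδdef
  have hδ : 0 < δ := by positivity
  obtain ⟨I, hI⟩ : ∃ I : Finset ι, ∑' i : ↑((I : Set ι)ᶜ), ‖f (i : ι)‖^2 < δ := by
    have htail := tendsto_tsum_compl_atTop_zero (fun i => ‖f i‖^2)
    obtain ⟨I, hI'⟩ := Filter.eventually_atTop.mp (htail.eventually (gt_mem_nhds hδ))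
    exact ⟨I, hI' I le_rfl⟩
  set δ' : ℝ := ε^2 / (2 * ((I.card : ℝ) + 1)) with hδ'def
  have hδ' : 0 < δ' := by positivity
  have hJev : ∀ᶠ J : Finset ι' in atTop, ∀ i ∈ I,
      ‖S (f i) - ∑ j ∈ J, T j (f i)‖^2 < δ' := by
    rw [Filter.eventually_all_finset]
    intro i _
    have h : Tendsto (fun J : Finset ι' => ∑ j ∈ J, T j (f i)) atTop (nhds (S (f i))) :=
      hT (f i)
    have h2 : Tendsto (fun J : Finset ι' => S (f i) - ∑ j ∈ J, T j (f i)) atTop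
        (nhds 0) := by
      have := ((tendsto_const_nhds :
        Tendsto (fun _ : Finset ι' => S (f i)) atTop (nhds (S (f i)))).sub h)
      rwa [sub_self] at this
    have h3 : Tendsto (fun J : Finset ι' => ‖S (f i) - ∑ j ∈ J, T j (f i)‖^2) atTop
        (nhds 0) := by
      have := h2.norm.pow 2
      simpa using this
    exact h3.eventually (gt_mem_nhds hδ')
  obtain ⟨J₀, hJ₀⟩ := Filter.eventually_atTop.mp hJev
  refine ⟨J₀, fun J hJ => ?_⟩
  set R : K m →L[ℂ] K n := S - ∑ j ∈ J, T j with hR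
  have hRD : ‖R‖ ≤ D := hRle J
  have hsum_eq : ∑ j ∈ J, hatCLM e G hG horth hcomplete m n (T j) y
      = hatCLM e G hG horth hcomplete m n (∑ j ∈ J, T j) y := by
    rw [hat_finsum e G hG horth hcomplete T J, ContinuousLinearMap.sum_apply]
  have hdist : dist (∑ j ∈ J, hatCLM e G hG horth hcomplete m n (T j) y)
      (hatCLM e G hG horth hcomplete m n S y)
      = ‖hatCLM e G hG horth hcomplete m n R y‖ := by
    rw [dist_eq_norm, hsum_eq, ← norm_neg, hR, hat_sub e G hG horth hcomplete,
      ContinuousLinearMap.sub_apply]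
    congr 1
    abel
  rw [hdist]
  have hs : HasSum (fun i => ‖R (f i)‖^2) (‖hatCLM e G hG horth hcomplete m n R y‖^2) :=
    Eb_hasSum_norm_sq e G hG horth hcomplete n
      (hatCLM_hasSum e G hG horth hcomplete m n R y)
  have key : ‖hatCLM e G hG horth hcomplete m n R y‖^2 < ε^2 := by
    have hsplit : ‖hatCLM e G hG horth hcomplete m n R y‖^2
        = ∑ i ∈ I, ‖R (f i)‖^2 + ∑' i : ↑((I : Set ι)ᶜ), ‖R (f (i : ι))‖^2 := by
      rw [Summable.sum_add_tsum_compl hs.summable, hs.tsum_eq]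
    have hterm : ∀ i ∈ I, ‖R (f i)‖^2 ≤ δ' := by
      intro i hi
      have := hJ₀ J hJ i hi
      have heq : R (f i) = S (f i) - ∑ j ∈ J, T j (f i) := by
        rw [hR, ContinuousLinearMap.sub_apply, ContinuousLinearMap.sum_apply]
      rw [heq]
      exact le_of_lt this
    have h1 : ∑ i ∈ I, ‖R (f i)‖^2 ≤ (I.card : ℝ) * δ' := by
      calc ∑ i ∈ I, ‖R (f i)‖^2 ≤ ∑ _i ∈ I, δ' := Finset.sum_le_sum hterm
        _ = (I.card : ℝ) * δ' := by rw [Finset.sum_const, nsmul_eq_mul]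
    have h2 : ∑' i : ↑((I : Set ι)ᶜ), ‖R (f (i : ι))‖^2
        ≤ D^2 * ∑' i : ↑((I : Set ι)ᶜ), ‖f (i : ι)‖^2 := by
      rw [← tsum_mul_left]
      refine Summable.tsum_le_tsum (fun i => ?_) (hs.summable.subtype _)
        ((hy.summable.mul_left (D^2)).subtype _)
      calc ‖R (f (i : ι))‖^2 ≤ (‖R‖ * ‖f (i : ι)‖)^2 := by
            apply pow_le_pow_left₀ (norm_nonneg _) (R.le_opNorm _)
        _ ≤ (D * ‖f (i : ι)‖)^2 := by
            apply pow_le_pow_left₀ (by positivity)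
            exact mul_le_mul_of_nonneg_right hRD (norm_nonneg _)
        _ = D^2 * ‖f (i : ι)‖^2 := mul_pow _ _ _
    have h3 : D^2 * ∑' i : ↑((I : Set ι)ᶜ), ‖f (i : ι)‖^2 ≤ D^2 * δ :=
      mul_le_mul_of_nonneg_left (le_of_lt hI) (by positivity)
    have hcard : (I.card : ℝ) * δ' < ε^2 / 2 := by
      rw [hδ'def]
      have hlt : (I.card : ℝ) < (I.card : ℝ) + 1 := by linarith
      calc (I.card : ℝ) * (ε^2 / (2 * ((I.card : ℝ) + 1)))
          < ((I.card : ℝ) + 1) * (ε^2 / (2 * ((I.card : ℝ) + 1))) := by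
            apply mul_lt_mul_of_pos_right hlt
            positivity
        _ = ε^2 / 2 := by field_simp
    have htail2 : D^2 * δ < ε^2 / 2 := by
      rw [hδdef]
      have hlt : D^2 < D^2 + 1 := by linarith
      calc D^2 * (ε^2 / (2 * (D^2 + 1))) < (D^2 + 1) * (ε^2 / (2 * (D^2 + 1))) := by
            apply mul_lt_mul_of_pos_right hlt
            positivity
        _ = ε^2 / 2 := by field_simp
      
    calc ‖hatCLM e G hG horth hcomplete m n R y‖^2
        = ∑ i ∈ I, ‖R (f i)‖^2 + ∑' i : ↑((I : Set ι)ᶜ), ‖R (f (i : ι))‖^2 := hsplit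
      _ ≤ (I.card : ℝ) * δ' + D^2 * δ := add_le_add h1 (le_trans h2 h3)
      _ < ε^2 / 2 + ε^2 / 2 := by
          apply add_lt_add_of_lt_of_le hcard (le_of_lt htail2)
      _ = ε^2 := by ring
  exact lt_of_pow_lt_pow_left₀ 2 (le_of_lt hε) key


theorem hat_isShift : IsShift (hatCLM e G hG horth hcomplete) where
  map_id := hat_id e G hG horth hcomplete
  map_comp := hat_comp e G hG horth hcomplete
  map_add := hat_add e G hG horth hcomplete
  map_smul := hat_smul e G hG horth hcomplete
  map_star := hat_star e G hG horth hcomplete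
  normal := fun m n {ι'} T S hT y => hat_normal e G hG horth hcomplete m n T S hT y

theorem hat_comm (m n : ℕ) (X : K m →L[ℂ] K n) :
    hatCLM e G hG horth hcomplete (m+1) (n+1) (G m n X)
      = G (m+1) (n+1) (hatCLM e G hG horth hcomplete m n X) := by
  ext y
  have h1 : ∀ x : K (m+1), HasSum (fun i => ((Eb e G n i ∘L X) ∘L adjoint (Eb e G m i)) x)
      (hatCLM e G hG horth hcomplete m n X x) := fun x => by
    simpa [ContinuousLinearMap.comp_apply] using hatCLM_hasSum e G hG horth hcomplete m n X x
  have h2 := hG.normal (m+1) (n+1) _ _ h1 y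
  have hfun : (fun i => G (m+1) (n+1) ((Eb e G n i ∘L X) ∘L adjoint (Eb e G m i)) y)
      = fun i => Eb e G (n+1) i ((G m n X) (adjoint (Eb e G (m+1) i) y)) := by
    funext i
    rw [hG.map_comp, hG.map_comp, hG.map_star, ← Eb_succ e G n i, ← Eb_succ e G m i]
    simp [ContinuousLinearMap.comp_apply]
  rw [hfun] at h2
  exact (hatCLM_hasSum e G hG horth hcomplete (m+1) (n+1) (G m n X) y).unique h2

theorem hatEb_comp
    (h00 : ∀ T : K 0 →L[ℂ] K 0, ∃ c : ℂ, T = c • ContinuousLinearMap.id ℂ (K 0)) (n : ℕ) :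
    ∀ (Z : K 0 →L[ℂ] K n) (k : ι),
      Eb e (hatCLM e G hG horth hcomplete) n k ∘L Z = G 0 n Z ∘L e k := by
  induction n with
  | zero =>
    intro Z k
    obtain ⟨c, rfl⟩ := h00 Z
    rw [hG.map_smul, hG.map_id, Eb_zero]
    ext x
    simp
  | succ n ih =>
    intro Z k
    ext x
    have hsucc : Eb e (hatCLM e G hG horth hcomplete) (n+1) k
        = hatCLM e G hG horth hcomplete n (n+1) (Eb e (hatCLM e G hG horth hcomplete) n k) :=
      Eb_succ e (hatCLM e G hG horth hcomplete) n k
    have h1 := hatCLM_hasSum e G hG horth hcomplete n (n+1)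
      (Eb e (hatCLM e G hG horth hcomplete) n k) (Z x)
    have hfun : (fun j => Eb e G (n+1) j ((Eb e (hatCLM e G hG horth hcomplete) n k)
        ((adjoint (Eb e G n j)) (Z x))))
        = fun j => G 0 (n+1) ((Eb e G n j ∘L adjoint (Eb e G n j)) ∘L Z) (e k x) := by
      funext j
      have hZ := ih (adjoint (Eb e G n j) ∘L Z) k
      have hZx : (Eb e (hatCLM e G hG horth hcomplete) n k) ((adjoint (Eb e G n j)) (Z x))
          = G 0 n (adjoint (Eb e G n j) ∘L Z) (e k x) := by
        have h := ContinuousLinearMap.ext_iff.mp hZ x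
        simpa [ContinuousLinearMap.comp_apply] using h
      rw [hZx, Eb_succ e G n j, ← ContinuousLinearMap.comp_apply (G n (n+1) (Eb e G n j)),
        ← hG.map_comp, ← ContinuousLinearMap.comp_assoc]
    rw [hfun] at h1
    have h2 : ∀ w : K 0, HasSum (fun j => ((Eb e G n j ∘L adjoint (Eb e G n j)) ∘L Z) w)
        (Z w) := fun w => by
      simpa [ContinuousLinearMap.comp_apply] using Eb_complete e G hG horth hcomplete n (Z w)
    have h3 := hG.normal 0 (n+1) _ _ h2 (e k x)
    have h4 := h1.unique h3
    rw [ContinuousLinearMap.comp_apply, ContinuousLinearMap.comp_apply, hsucc]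
    exact h4

theorem hat_intertwine
    (h00 : ∀ T : K 0 →L[ℂ] K 0, ∃ c : ℂ, T = c • ContinuousLinearMap.id ℂ (K 0)) (m : ℕ) :
    ∀ (n : ℕ) (X : K m →L[ℂ] K n) (i : ι),
      G m n X ∘L Eb e (hatCLM e G hG horth hcomplete) m i
        = Eb e (hatCLM e G hG horth hcomplete) n i ∘L X := by
  induction m with
  | zero =>
    intro n Z i
    exact (hatEb_comp e G hG horth hcomplete h00 n Z i).symm
  | succ m ih =>
    intro n X i
    ext v
    have h1 := hatCLM_hasSum e G hG horth hcomplete m (m+1)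
      (Eb e (hatCLM e G hG horth hcomplete) m i) v
    have h2 := h1.mapL (G (m+1) n X)
    have hfun : (fun j => G (m+1) n X (Eb e G (m+1) j
        ((Eb e (hatCLM e G hG horth hcomplete) m i) ((adjoint (Eb e G m j)) v))))
        = fun j => Eb e (hatCLM e G hG horth hcomplete) n i
            (X (Eb e G m j ((adjoint (Eb e G m j)) v))) := by
      funext j
      have hIH := ih n (X ∘L Eb e G m j) i
      rw [Eb_succ e G m j, ← ContinuousLinearMap.comp_apply (G (m+1) n X), ← hG.map_comp,
        ← ContinuousLinearMap.comp_apply (G m n (X ∘L Eb e G m j)), hIH]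
      simp [ContinuousLinearMap.comp_apply]
    rw [hfun] at h2
    have h3 := (Eb_complete e G hG horth hcomplete m v).mapL
      (Eb e (hatCLM e G hG horth hcomplete) n i ∘L X)
    simp only [ContinuousLinearMap.comp_apply] at h3
    have h4 := h2.unique h3
    rw [ContinuousLinearMap.comp_apply, ContinuousLinearMap.comp_apply,
      Eb_succ e (hatCLM e G hG horth hcomplete) m i]
    exact h4

end Aux

/-- Let `K` be a category of Hilbert spaces with objects indexed by ℕ and
`(0,0) = ℂ` (the object `0` is irreducible), equipped with a shift `F` (a normal
*-functor with `F(n) = n+1` on objects).  Let `(ψ_{i,1})` be an orthonormal basis of the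
Hilbert space `(0,1)`.  Then `F̂`, defined by `F̂(X) = ∑ᵢ Fⁿ(ψ_{i,1}) ∘ X ∘ Fᵐ(ψ_{i,1})*`
for `X ∈ (m,n)`, is a normal *-functor with `F̂(n) = n+1` which commutes with `F`, and
the double-hat recovers `F`: `F̂̂ = F`. -/
theorem hat_functor_exists
    {K : ℕ → Type} [∀ n, NormedAddCommGroup (K n)] [∀ n, InnerProductSpace ℂ (K n)]
    [∀ n, CompleteSpace (K n)]
    (h00 : ∀ T : K 0 →L[ℂ] K 0, ∃ c : ℂ, T = c • ContinuousLinearMap.id ℂ (K 0))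
    {ι : Type} [DecidableEq ι] (e : ι → (K 0 →L[ℂ] K 1))
    (horth : ∀ i j, (adjoint (e i)) ∘L (e j)
      = if i = j then ContinuousLinearMap.id ℂ (K 0) else 0)
    (hcomplete : ∀ x : K 1, HasSum (fun i => e i ((adjoint (e i)) x)) x)
    (F : ∀ m n : ℕ, (K m →L[ℂ] K n) → (K (m+1) →L[ℂ] K (n+1)))
    (hF : IsShift F) :
    ∃ Fh : ∀ m n : ℕ, (K m →L[ℂ] K n) → (K (m+1) →L[ℂ] K (n+1)),
      IsHatOf F Fh e ∧
      IsShift Fh ∧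
      (∀ (m n : ℕ) (X : K m →L[ℂ] K n), Fh (m+1) (n+1) (F m n X) = F (m+1) (n+1) (Fh m n X)) ∧
      IsHatOf Fh F e := by
  refine ⟨hatCLM e F hF horth hcomplete, ?_, ?_, ?_, ?_⟩
  · intro m n X y
    exact hatCLM_hasSum e F hF horth hcomplete m n X y
  · exact hat_isShift e F hF horth hcomplete
  · intro m n X
    exact hat_comm e F hF horth hcomplete m n X
  · intro m n X y
    show HasSum (fun i => Eb e (hatCLM e F hF horth hcomplete) n i
      (X (adjoint (Eb e (hatCLM e F hF horth hcomplete) m i) y))) (F m n X y)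
    have h1 := (Eb_complete e (hatCLM e F hF horth hcomplete)
      (hat_isShift e F hF horth hcomplete) horth hcomplete m y).mapL (F m n X)
    have hfun : (fun i => F m n X (Eb e (hatCLM e F hF horth hcomplete) m i
        (adjoint (Eb e (hatCLM e F hF horth hcomplete) m i) y)))
        = fun i => Eb e (hatCLM e F hF horth hcomplete) n i
            (X (adjoint (Eb e (hatCLM e F hF horth hcomplete) m i) y)) := by
      funext i
      have h := hat_intertwine e F hF horth hcomplete h00 m n X i
      have h2 := ContinuousLinearMap.ext_iff.mp h
        (adjoint (Eb e (hatCLM e F hF horth hcomplete) m i) y)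
      simpa [ContinuousLinearMap.comp_apply] using h2
    rw [hfun] at h1
    exact h1
end
end
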